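/- For every semicoherent structure function φ and every k ∈ {0,…,n}, the tail signature satisfies ℙ(T > X_{k:n}) = Σ_{A ⊆ [n], |A| = n−k} q(A)·φ(A) = Σ_{A ⊆ [n]} m_φ(A)·ℙ(X_{k:n} < min_{i∈A} X_i). -/

import Mathlib

open MeasureTheory ProbabilityTheory Finset

/-- The `k`-th order statistic (`k`-th smallest value) of `X 1 ω, …, X n ω`,
valued in `EReal` with the convention that the `0`-th order statistic is `−∞`. -/
noncomputable def orderStatE {Ω : Type*} {n : ℕ} (X : Fin n → Ω → ℝ) (k : ℕ) (ω : Ω) : EReal :=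
  sInf {t : EReal | k ≤ (Finset.univ.filter fun i => (X i ω : EReal) ≤ t).card}

/-! Off a null set the lifetimes are pairwise distinct, and then exactly one set `A` of size
`n - k` carries the `n - k` largest of them. On that event `X_{k:n} < min_{i ∈ B} X_i` holds iff
`B ⊆ A`, and `X_{k:n} < T` holds iff `φ A = 1`; so both probabilities are sums of `q A` over the
sets of size `n - k`, and the Möbius form follows from `∑_{B ⊆ A} m_φ B = φ A`. -/

section Moebius

variable {α R : Type*} [DecidableEq α] [CommRing R]

def moebius (f : Finset α → R) (A : Finset α) : R :=
  ∑ B ∈ A.powerset, (-1) ^ (#A - #B) * f B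

theorem sum_Icc_neg_one_pow_card_sub {B C : Finset α} (hBC : B ⊆ C) :
    ∑ A ∈ Icc B C, (-1 : R) ^ (#A - #B) = if B = C then 1 else 0 := by
  have hdisj : ∀ D ∈ (C \ B).powerset, Disjoint B D := fun D hD =>
    disjoint_of_subset_right (mem_powerset.1 hD) disjoint_sdiff
  rw [Icc_eq_image_powerset hBC, sum_image fun D hD E hE h => by
    rw [← union_sdiff_cancel_left (hdisj D hD), h, union_sdiff_cancel_left (hdisj E hE)]]
  rw [sum_congr rfl fun D hD => by
    rw [card_union_of_disjoint (hdisj D hD), Nat.add_sub_cancel_left]]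
  have := congrArg (Int.cast : ℤ → R) (sum_powerset_neg_one_pow_card (x := C \ B))
  push_cast at this
  rw [this]
  exact if_congr ⟨fun h => hBC.antisymm (sdiff_eq_empty_iff_subset.1 h), fun h => by simp [h]⟩
    rfl rfl

theorem sum_powerset_moebius (f : Finset α → R) (C : Finset α) :
    ∑ A ∈ C.powerset, moebius f A = f C := by
  unfold moebius
  rw [sum_comm' (t' := C.powerset) (s' := fun B => Icc B C) (fun A B => by
    simp only [mem_powerset, mem_Icc]
    exact ⟨fun ⟨hAC, hBA⟩ => ⟨⟨hBA, hAC⟩, hBA.trans hAC⟩, fun ⟨⟨hBA, hAC⟩, _⟩ => ⟨hAC, hBA⟩⟩)]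
  simp_rw [← sum_mul]
  rw [sum_congr rfl fun B hB => by rw [sum_Icc_neg_one_pow_card_sub (mem_powerset.1 hB)]]
  simp

theorem sum_moebius_mul_sum_superset [Fintype α] (f g : Finset α → R) (𝒞 : Finset (Finset α)) :
    ∑ A, moebius f A * ∑ C ∈ 𝒞 with A ⊆ C, g C = ∑ C ∈ 𝒞, g C * f C := by
  simp_rw [mul_sum]
  rw [sum_comm' (t' := 𝒞) (s' := powerset) (fun A C => by simp [and_comm])]
  simp_rw [← sum_mul, sum_powerset_moebius, mul_comm]

end Moebius

section TopSet

variable {ι α : Type*}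

def IsTopSet [LT α] (f : ι → α) (A : Finset ι) : Prop :=
  ∀ i, i ∉ A → ∀ j ∈ A, f i < f j

theorem IsTopSet.eq_of_card_eq [Preorder α] {f : ι → α} {A B : Finset ι}
    (hA : IsTopSet f A) (hB : IsTopSet f B) (hcard : #A = #B) : A = B := by
  by_contra hne
  obtain ⟨i, hiA, hiB⟩ := not_subset.1 fun h => hne (eq_of_subset_of_card_le h hcard.ge)
  obtain ⟨j, hjB, hjA⟩ := not_subset.1 fun h => hne (eq_of_subset_of_card_le h hcard.le).symm
  exact lt_asymm (hA j hjA i hiA) (hB i hiB j hjB)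

theorem exists_isTopSet_card_eq [Fintype ι] [LinearOrder α] {f : ι → α}
    (hf : Function.Injective f) {m : ℕ} (hm : m ≤ Fintype.card ι) :
    ∃ A : Finset ι, #A = m ∧ IsTopSet f A := by
  classical
  induction m with
  | zero => exact ⟨∅, card_empty, fun _ _ _ hj => absurd hj (notMem_empty _)⟩
  | succ m ih =>
    obtain ⟨A, hcard, hA⟩ := ih (Nat.le_of_succ_le hm)
    have hne : Aᶜ.Nonempty := by
      rw [← card_pos, card_compl]; omega
    obtain ⟨j, hj, hjmax⟩ := exists_max_image Aᶜ f hne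
    refine ⟨insert j A, by rw [card_insert_of_notMem (mem_compl.1 hj), hcard], ?_⟩
    intro i hi l hl
    rw [mem_insert, not_or] at hi
    rcases mem_insert.1 hl with rfl | hl
    · exact (hjmax i (mem_compl.2 hi.2)).lt_of_ne (hf.ne hi.1)
    · exact hA i hi.2 l hl

end TopSet

section Partition

variable {Ω ι : Type*} [MeasurableSpace Ω] {μ : Measure Ω}

theorem measureReal_eq_sum_of_ae_partition [IsFiniteMeasure μ] {s : Finset ι} {S : ι → Set Ω}
    (hS : ∀ a ∈ s, MeasurableSet (S a)) (hd : (s : Set ι).PairwiseDisjoint S)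
    (hcover : ∀ᵐ ω ∂μ, ∃ a ∈ s, ω ∈ S a) {E : Set Ω} {P : ι → Prop} [DecidablePred P]
    (hE : ∀ a ∈ s, ∀ ω ∈ S a, ω ∈ E ↔ P a) :
    μ.real E = ∑ a ∈ s with P a, μ.real (S a) := by
  have hEU : E =ᵐ[μ] ⋃ a ∈ s.filter P, S a := by
    filter_upwards [hcover] with ω ⟨a, ha, hωa⟩
    refine propext ((hE a ha ω hωa).trans ⟨fun hPa => ?_, fun hω => ?_⟩)
    · exact Set.mem_biUnion (mem_filter.2 ⟨ha, hPa⟩) hωa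
    · obtain ⟨b, hb, hωb⟩ := Set.mem_iUnion₂.1 hω
      obtain ⟨hbs, hPb⟩ := mem_filter.1 hb
      rwa [hd.elim_set ha hbs ω hωa hωb]
  rw [measureReal_congr hEU,
    measureReal_biUnion_finset (hd.subset (coe_subset.2 (filter_subset P s)))
      fun a ha => hS a (mem_filter.1 ha).1]

theorem ae_injective_of_measure_eq_zero [Countable ι] {X : ι → Ω → ℝ}
    (hties : ∀ i j, i ≠ j → μ {ω | X i ω = X j ω} = 0) :
    ∀ᵐ ω ∂μ, Function.Injective (X · ω) := by
  have h : ∀ i j, ∀ᵐ ω ∂μ, X i ω = X j ω → i = j := fun i j => by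
    by_cases hij : i = j
    · exact Filter.Eventually.of_forall fun _ _ => hij
    · filter_upwards [measure_eq_zero_iff_ae_notMem.1 (hties i j hij)] with ω hω heq
      exact absurd heq hω
  filter_upwards [ae_all_iff.2 fun i => ae_all_iff.2 (h i)] with ω hω i j
  exact hω i j

theorem measurableSet_isTopSet [Countable ι] {X : ι → Ω → ℝ} (hX : ∀ i, Measurable (X i))
    (A : Finset ι) : MeasurableSet {ω | IsTopSet (X · ω) A} := by
  simp only [IsTopSet, Set.ofPred_forall]
  exact .iInter fun i => .iInter fun _ => .iInter fun j => .iInter fun _ =>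
    measurableSet_lt (hX i) (hX j)

theorem measureReal_eq_sum_isTopSet [Fintype ι] [IsFiniteMeasure μ]
    {X : ι → Ω → ℝ} (hX : ∀ i, Measurable (X i)) (hinj : ∀ᵐ ω ∂μ, Function.Injective (X · ω))
    {m : ℕ} (hm : m ≤ Fintype.card ι) {E : Set Ω} {P : Finset ι → Prop} [DecidablePred P]
    (hE : ∀ A : Finset ι, #A = m → ∀ ω, IsTopSet (X · ω) A → (ω ∈ E ↔ P A)) :
    μ.real E = ∑ A ∈ powersetCard m univ with P A, μ.real {ω | IsTopSet (X · ω) A} := by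
  refine measureReal_eq_sum_of_ae_partition (fun A _ => measurableSet_isTopSet hX A)
    (fun A hA B hB hAB => Set.disjoint_left.2 fun ω hωA hωB => hAB ?_) ?_
    fun A hA => hE A (mem_powersetCard_univ.1 hA)
  · exact hωA.eq_of_card_eq hωB
      ((mem_powersetCard_univ.1 hA).trans (mem_powersetCard_univ.1 hB).symm)
  · filter_upwards [hinj] with ω hω
    obtain ⟨A, hcard, hA⟩ := exists_isTopSet_card_eq hω hm
    exact ⟨A, mem_powersetCard_univ.2 hcard, hA⟩

end Partition

theorem EReal.coe_lt_biInf_coe_iff {ι : Type*} {f : ι → ℝ} {B : Finset ι} {x : ℝ} :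
    (x : EReal) < ⨅ i ∈ B, (f i : EReal) ↔ ∀ i ∈ B, x < f i := by
  rw [← Finset.inf_eq_iInf, Finset.lt_inf_iff (EReal.coe_lt_top x)]
  simp only [EReal.coe_lt_coe_iff]

theorem EReal.biInf_coe_ne_bot {ι : Type*} (f : ι → ℝ) (B : Finset ι) :
    ⨅ i ∈ B, (f i : EReal) ≠ ⊥ := by
  rw [← Finset.inf_eq_iInf, ← bot_lt_iff_ne_bot, Finset.lt_inf_iff bot_lt_top]
  exact fun i _ => EReal.bot_lt_coe _

section OrderStatistic

variable {Ω : Type*} {n : ℕ} {X : Fin n → Ω → ℝ} {k : ℕ} {ω : Ω}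

theorem orderStatE_lt_iff {t : EReal} (ht : t ≠ ⊥) :
    orderStatE X k ω < t ↔ k ≤ #{i | (X i ω : EReal) < t} := by
  unfold orderStatE
  rw [sInf_lt_iff]
  constructor
  · rintro ⟨s, hs, hst⟩
    exact hs.trans (card_le_card (monotone_filter_right _ fun i _ h => h.trans_lt hst))
  · intro h
    refine ⟨(univ.filter fun i => (X i ω : EReal) < t).sup fun i => (X i ω : EReal), ?_, ?_⟩
    · exact h.trans (card_le_card (monotone_filter_right _ fun i _ hi =>
        le_sup (f := fun i => (X i ω : EReal)) (mem_filter.2 ⟨mem_univ i, hi⟩)))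
    · exact (Finset.sup_lt_iff (bot_lt_iff_ne_bot.2 ht)).2 fun i hi => (mem_filter.1 hi).2


theorem IsTopSet.orderStatE_lt_biInf_iff {A : Finset (Fin n)} (hA : IsTopSet (X · ω) A)
    (hcard : #A = n - k) (hkn : k ≤ n) (B : Finset (Fin n)) :
    orderStatE X k ω < ⨅ i ∈ B, (X i ω : EReal) ↔ B ⊆ A := by
  have hcompl : #Aᶜ = k := by rw [card_compl, Fintype.card_fin]; omega
  simp only [orderStatE_lt_iff (EReal.biInf_coe_ne_bot _ _), EReal.coe_lt_biInf_coe_iff]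
  constructor
  · intro hk j hjB
    by_contra hjA
    have hsub : (univ.filter fun i => ∀ l ∈ B, X i ω < X l ω) ⊂ Aᶜ := by
      refine Finset.ssubset_iff_subset_ne.2 ⟨fun i hi => mem_compl.2 fun hiA => ?_, fun h => ?_⟩
      · exact lt_asymm (hA j hjA i hiA) ((mem_filter.1 hi).2 j hjB)
      · rw [← mem_compl, ← h, mem_filter] at hjA
        exact lt_irrefl _ (hjA.2 j hjB)
    exact (card_lt_card hsub).not_ge (hcompl ▸ hk)
  · intro hBA
    rw [← hcompl]
    exact card_le_card fun i hi =>
      mem_filter.2 ⟨mem_univ i, fun l hl => hA i (mem_compl.1 hi) l (hBA hl)⟩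

theorem IsTopSet.orderStatE_lt_iSup_iff {A : Finset (Fin n)} (hA : IsTopSet (X · ω) A)
    (hcard : #A = n - k) (hkn : k ≤ n) {P : Finset (Fin n) → Prop}
    (hP : ∀ ⦃B C⦄, B ⊆ C → P B → P C) :
    orderStatE X k ω < ⨆ (B : Finset (Fin n)) (_ : P B), ⨅ i ∈ B, (X i ω : EReal) ↔ P A := by
  simp only [lt_iSup_iff, exists_prop, hA.orderStatE_lt_biInf_iff hcard hkn]
  exact ⟨fun ⟨B, hB, hBA⟩ => hP hBA hB, fun h => ⟨A, h, subset_rfl⟩⟩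

end OrderStatistic

theorem barlow_proschan_stmt_10_general
    {Ω : Type*} [MeasureSpace Ω] [IsProbabilityMeasure (ℙ : Measure Ω)]
    {n : ℕ} (X : Fin n → Ω → ℝ) (hX : ∀ i, Measurable (X i))
    (hties : ∀ i j : Fin n, i ≠ j → (ℙ : Measure Ω) {ω | X i ω = X j ω} = 0)
    (φ : Finset (Fin n) → ℕ) (hφ01 : ∀ A, φ A ≤ 1)
    (hmono : ∀ ⦃A B : Finset (Fin n)⦄, A ⊆ B → φ A ≤ φ B)
    (k : ℕ) (hkn : k ≤ n) :
    ((ℙ : Measure Ω) {ω | orderStatE X k ω <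
        ⨆ (A : Finset (Fin n)) (_ : φ A = 1), ⨅ i ∈ A, (X i ω : EReal)}).toReal
      = ∑ A ∈ (Finset.univ : Finset (Fin n)).powerset.filter (fun A => A.card = n - k),
          ((ℙ : Measure Ω) {ω | ∀ i, i ∉ A → ∀ l ∈ A, X i ω < X l ω}).toReal * (φ A : ℝ)
    ∧ ((ℙ : Measure Ω) {ω | orderStatE X k ω <
        ⨆ (A : Finset (Fin n)) (_ : φ A = 1), ⨅ i ∈ A, (X i ω : EReal)}).toReal
      = ∑ A ∈ (Finset.univ : Finset (Fin n)).powerset,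
          (∑ B ∈ A.powerset, (-1 : ℝ) ^ (A.card - B.card) * (φ B : ℝ))
            * ((ℙ : Measure Ω) {ω |
                orderStatE X k ω < ⨅ i ∈ A, (X i ω : EReal)}).toReal := by
  have hP : ∀ ⦃B C : Finset (Fin n)⦄, B ⊆ C → φ B = 1 → φ C = 1 := fun B C hBC hB => by
    have := hmono hBC; have := hφ01 C; omega
  have hinj := ae_injective_of_measure_eq_zero hties
  have hm : n - k ≤ Fintype.card (Fin n) := by simp
  have hT := measureReal_eq_sum_isTopSet hX hinj hm (P := fun A => φ A = 1)
    (E := {ω | orderStatE X k ω < ⨆ (A : Finset (Fin n)) (_ : φ A = 1), ⨅ i ∈ A, (X i ω : EReal)})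
    fun A hA ω hω => hω.orderStatE_lt_iSup_iff hA hkn hP
  have hmin (B : Finset (Fin n)) :=
    measureReal_eq_sum_isTopSet hX hinj hm (P := (B ⊆ ·))
      (E := {ω | orderStatE X k ω < ⨅ i ∈ B, (X i ω : EReal)})
      fun A hA ω hω => hω.orderStatE_lt_biInf_iff hA hkn B
  let q (A : Finset (Fin n)) : ℝ := (ℙ : Measure Ω).real {ω | IsTopSet (X · ω) A}
  have hφ : ∑ A ∈ powersetCard (n - k) univ with φ A = 1, q A
      = ∑ A ∈ powersetCard (n - k) univ, q A * φ A := by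
    rw [sum_filter]
    refine sum_congr rfl fun A _ => ?_
    rcases Nat.le_one_iff_eq_zero_or_eq_one.1 (hφ01 A) with h | h <;> simp [h]
  rw [← powersetCard_eq_filter, powerset_univ]
  simp only [← measureReal_def, hmin, hT]
  exact ⟨hφ, hφ.trans (sum_moebius_mul_sum_superset (fun A => (φ A : ℝ)) q _).symm⟩

theorem barlow_proschan_stmt_10
    {Ω : Type*} [MeasureSpace Ω] [IsProbabilityMeasure (ℙ : Measure Ω)]
    {n : ℕ} (X : Fin n → Ω → ℝ) (hX : ∀ i, Measurable (X i))
    (hties : ∀ i j : Fin n, i ≠ j → (ℙ : Measure Ω) {ω | X i ω = X j ω} = 0)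
    (φ : Finset (Fin n) → ℕ) (hφ01 : ∀ A, φ A ≤ 1)
    (hmono : ∀ ⦃A B : Finset (Fin n)⦄, A ⊆ B → φ A ≤ φ B)
    (hempty : φ ∅ = 0) (hfull : φ Finset.univ = 1)
    (k : ℕ) (hkn : k ≤ n) :
    ((ℙ : Measure Ω) {ω | orderStatE X k ω <
        ⨆ (A : Finset (Fin n)) (_ : φ A = 1), ⨅ i ∈ A, (X i ω : EReal)}).toReal
      = ∑ A ∈ (Finset.univ : Finset (Fin n)).powerset.filter (fun A => A.card = n - k),
          ((ℙ : Measure Ω) {ω | ∀ i, i ∉ A → ∀ l ∈ A, X i ω < X l ω}).toReal * (φ A : ℝ)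
    ∧ ((ℙ : Measure Ω) {ω | orderStatE X k ω <
        ⨆ (A : Finset (Fin n)) (_ : φ A = 1), ⨅ i ∈ A, (X i ω : EReal)}).toReal
      = ∑ A ∈ (Finset.univ : Finset (Fin n)).powerset,
          (∑ B ∈ A.powerset, (-1 : ℝ) ^ (A.card - B.card) * (φ B : ℝ))
            * ((ℙ : Measure Ω) {ω |
                orderStatE X k ω < ⨅ i ∈ A, (X i ω : EReal)}).toReal :=
  barlow_proschan_stmt_10_general X hX hties φ hφ01 hmono k hkn
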